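/- Let X be a real Banach space, T > 0, J = [0,T], Γ ⊆ ℝ^m equipped with a probability measure ρ, K̄ > 0, and P a bounded linear operator on X. For each y ∈ Γ let W(y) be a bounded linear operator on X with ‖P ∘ W(y)‖ ≤ K̄, let g(·,y) : J → X be continuous and v(y) ∈ X; let u(·,y) : J → X be differentiable with ∂_t u(t,y) = −u(t,y) + W(y) u(t,y) + g(t,y) and u(0,y) = v(y), and let u_n(·,y) : J → X be differentiable with ∂_t u_n(t,y) = P(−u_n(t,y) + W(y) u_n(t,y) + g(t,y)), u_n(0,y) = P v(y), and P u_n(t,y) = u_n(t,y) for all t. Assume the maps y ↦ sup_{t∈J}‖u(t,y) − u_n(t,y)‖_X and y ↦ sup_{t∈J}‖u(t,y) − P u(t,y)‖_X are measurable and square-integrable with respect to ρ. Then (∫_Γ sup_{t∈J}‖u(t,y) − u_n(t,y)‖_X² dρ(y))^{1/2} ≤ e^{K̄ T} · (∫_Γ sup_{t∈J}‖u(t,y) − P u(t,y)‖_X² dρ(y))^{1/2}. -/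

import Mathlib

open Set MeasureTheory Real

/-!
Fix `y` and put `w = P u - uₙ`. Since `P uₙ = uₙ`, the two equations give
`w' = -w + P W (u - uₙ)` with `w(0) = 0`, and `u - uₙ = (u - P u) + w`. Multiplying by `eᵗ`
removes the dissipative term, so `‖(eᵗ w)'‖ ≤ K̄ ‖eᵗ w‖ + K̄ M eᵗ` with `M = sup ‖u - P u‖`,
and comparison with `M (e^{(K̄+1)t} - eᵗ)` yields `‖w(t)‖ ≤ M (e^{K̄t} - 1)`, hence
`sup ‖u - uₙ‖ ≤ e^{K̄T} M`. Squaring and integrating over `Γ` gives the `L²_ρ` bound.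
-/

theorem norm_le_of_norm_deriv_le_of_supersolution {E : Type*} [NormedAddCommGroup E]
    [NormedSpace ℝ E] {f f' : ℝ → E} {B B' φ : ℝ → ℝ} {a b K : ℝ}
    (hf : ContinuousOn f (Icc a b)) (hf' : ∀ x ∈ Ico a b, HasDerivWithinAt f (f' x) (Ici x) x)
    (ha : ‖f a‖ ≤ B a) (hB : ∀ x, HasDerivAt B (B' x) x)
    (bound : ∀ x ∈ Ico a b, ‖f' x‖ ≤ K * ‖f x‖ + φ x)
    (super : ∀ x ∈ Ico a b, K * B x + φ x ≤ B' x) :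
    ∀ x ∈ Icc a b, ‖f x‖ ≤ B x := by
  -- perturb `B` by `η e^{(K+1)x}` to get a strict supersolution, then let `η → 0`
  have perturbed : ∀ η > 0, ∀ x ∈ Icc a b, ‖f x‖ ≤ B x + η * exp ((K + 1) * x) := by
    intro η hη
    have hE : ∀ x, HasDerivAt (fun x => exp ((K + 1) * x)) (exp ((K + 1) * x) * (K + 1)) x :=
      fun x => by simpa using ((hasDerivAt_id x).const_mul (K + 1)).exp
    refine image_norm_le_of_norm_deriv_right_lt_deriv_boundary hf hf' ?_
      (fun x => (hB x).add ((hE x).const_mul η)) ?_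
    · have := mul_pos hη (exp_pos ((K + 1) * a))
      linarith
    · intro x hx hfx
      have := mul_pos hη (exp_pos ((K + 1) * x))
      calc ‖f' x‖ ≤ K * (B x + η * exp ((K + 1) * x)) + φ x := hfx ▸ bound x hx
        _ ≤ B' x + K * (η * exp ((K + 1) * x)) := by linarith [super x hx]
        _ < B' x + η * (exp ((K + 1) * x) * (K + 1)) := by nlinarith
  intro x hx
  refine le_of_forall_pos_le_add fun ε hε => ?_
  have hpos := exp_pos ((K + 1) * x)
  simpa [div_mul_cancel₀ _ hpos.ne'] using perturbed (ε / exp ((K + 1) * x)) (div_pos hε hpos) x hx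

theorem sqrt_integral_sq_le_mul_sqrt_integral_sq {α : Type*} [MeasurableSpace α] {μ : Measure α}
    {f g : α → ℝ} {c : ℝ} (hc : 0 ≤ c) (hf : ∀ x, 0 ≤ f x) (hfg : ∀ x, f x ≤ c * g x)
    (hg : Integrable (fun x => g x ^ 2) μ) :
    √(∫ x, f x ^ 2 ∂μ) ≤ c * √(∫ x, g x ^ 2 ∂μ) := by
  have hmono : ∫ x, f x ^ 2 ∂μ ≤ ∫ x, c ^ 2 * g x ^ 2 ∂μ :=
    integral_mono_of_nonneg (ae_of_all _ fun x => sq_nonneg _) (hg.const_mul _)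
      (ae_of_all _ fun x => by dsimp only; rw [← mul_pow]; exact pow_le_pow_left₀ (hf x) (hfg x) 2)
  calc √(∫ x, f x ^ 2 ∂μ) ≤ √(∫ x, c ^ 2 * g x ^ 2 ∂μ) := sqrt_le_sqrt hmono
    _ = c * √(∫ x, g x ^ 2 ∂μ) := by
      rw [integral_const_mul, sqrt_mul (sq_nonneg _), sqrt_sq hc]

theorem le_iSup_Icc_of_continuousOn {f : ℝ → ℝ} {a b t : ℝ} (hf : ContinuousOn f (Icc a b))
    (ht : t ∈ Icc a b) : f t ≤ ⨆ s : Icc a b, f s := by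
  have hbdd := (isCompact_Icc.image_of_continuousOn hf).bddAbove
  rw [← range_domRestrict] at hbdd
  exact le_ciSup hbdd ⟨t, ht⟩

section ProjectedEquation

variable {X : Type*} [NormedAddCommGroup X] [NormedSpace ℝ X] {P W : X →L[ℝ] X}
  {g u un : ℝ → X} {T K M : ℝ}

theorem hasDerivAt_proj_sub {t : ℝ} (hu : HasDerivAt u (-(u t) + W (u t) + g t) t)
    (hun : HasDerivAt un (P (-(un t) + W (un t) + g t)) t) (hPun : P (un t) = un t) :
    HasDerivAt (fun s => P (u s) - un s) (-(P (u t) - un t) + P.comp W (u t - un t)) t := by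
  refine ((P.hasFDerivAt.comp_hasDerivAt t hu).sub hun).congr_deriv ?_
  simp only [ContinuousLinearMap.comp_apply, map_add, map_neg, map_sub, hPun]
  abel

theorem norm_proj_sub_le (hPW : ‖P.comp W‖ ≤ K)
    (hu : ∀ t ∈ Icc (0 : ℝ) T, HasDerivAt u (-(u t) + W (u t) + g t) t)
    (hun : ∀ t ∈ Icc (0 : ℝ) T, HasDerivAt un (P (-(un t) + W (un t) + g t)) t)
    (h0 : un 0 = P (u 0)) (hPun : ∀ t ∈ Icc (0 : ℝ) T, P (un t) = un t)
    (hM : ∀ t ∈ Icc (0 : ℝ) T, ‖u t - P (u t)‖ ≤ M) :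
    ∀ t ∈ Icc (0 : ℝ) T, ‖P (u t) - un t‖ ≤ M * (exp (K * t) - 1) := by
  have hK : 0 ≤ K := (norm_nonneg _).trans hPW
  set w : ℝ → X := fun s => P (u s) - un s
  -- the factor `e^t` absorbs the dissipative term `-w` of `w' = -w + P W (u - uₙ)`
  have hF : ∀ t ∈ Icc (0 : ℝ) T,
      HasDerivAt (fun s => exp s • w s) (exp t • P.comp W (u t - un t)) t := by
    intro t ht
    refine ((hasDerivAt_exp t).smul (hasDerivAt_proj_sub (hu t ht) (hun t ht) (hPun t ht)))
      |>.congr_deriv ?_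
    rw [smul_add, smul_neg]
    abel
  have hbound : ∀ t ∈ Icc (0 : ℝ) T,
      ‖exp t • P.comp W (u t - un t)‖ ≤ K * ‖exp t • w t‖ + K * M * exp t := by
    intro t ht
    have herr : ‖u t - un t‖ ≤ M + ‖w t‖ := by
      rw [← sub_add_sub_cancel (u t) (P (u t))]
      exact (norm_add_le _ _).trans (add_le_add_left (hM t ht) _)
    rw [norm_smul, norm_smul, Real.norm_of_nonneg (exp_pos t).le]
    calc exp t * ‖P.comp W (u t - un t)‖ ≤ exp t * (K * (M + ‖w t‖)) := by
          gcongr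
          exact ((P.comp W).le_opNorm _).trans (mul_le_mul hPW herr (norm_nonneg _) hK)
      _ = K * (exp t * ‖w t‖) + K * M * exp t := by ring
  have hBderiv : ∀ x, HasDerivAt (fun x => M * (exp ((K + 1) * x) - exp x))
      (M * (exp ((K + 1) * x) * (K + 1) - exp x)) x := fun x => by
    simpa using ((((hasDerivAt_id x).const_mul (K + 1)).exp).sub (hasDerivAt_exp x)).const_mul M
  have hFB := norm_le_of_norm_deriv_le_of_supersolution (K := K) (φ := fun x => K * M * exp x)
    (fun t ht => (hF t ht).continuousAt.continuousWithinAt)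
    (fun t ht => (hF t (Ico_subset_Icc_self ht)).hasDerivWithinAt)
    (by simp [w, h0]) hBderiv (fun t ht => hbound t (Ico_subset_Icc_self ht)) ?super
  case super =>
    intro x hx
    have hM0 : 0 ≤ M := (norm_nonneg _).trans (hM x (Ico_subset_Icc_self hx))
    have : exp x ≤ exp ((K + 1) * x) := exp_le_exp.2 (by nlinarith [hx.1])
    nlinarith
  intro t ht
  have h := hFB t ht
  rw [norm_smul, Real.norm_of_nonneg (exp_pos t).le,
    show (K + 1) * t = K * t + t by ring, exp_add] at h
  exact le_of_mul_le_mul_left (h.trans_eq (by ring)) (exp_pos t)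

theorem norm_sub_le_exp_mul (hPW : ‖P.comp W‖ ≤ K)
    (hu : ∀ t ∈ Icc (0 : ℝ) T, HasDerivAt u (-(u t) + W (u t) + g t) t)
    (hun : ∀ t ∈ Icc (0 : ℝ) T, HasDerivAt un (P (-(un t) + W (un t) + g t)) t)
    (h0 : un 0 = P (u 0)) (hPun : ∀ t ∈ Icc (0 : ℝ) T, P (un t) = un t)
    (hM : ∀ t ∈ Icc (0 : ℝ) T, ‖u t - P (u t)‖ ≤ M) {t : ℝ} (ht : t ∈ Icc 0 T) :
    ‖u t - un t‖ ≤ exp (K * T) * M := by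
  have hK : 0 ≤ K := (norm_nonneg _).trans hPW
  have hM0 : 0 ≤ M := (norm_nonneg _).trans (hM t ht)
  calc ‖u t - un t‖ = ‖(u t - P (u t)) + (P (u t) - un t)‖ := by rw [sub_add_sub_cancel]
    _ ≤ M + M * (exp (K * t) - 1) :=
      (norm_add_le _ _).trans (add_le_add (hM t ht) (norm_proj_sub_le hPW hu hun h0 hPun hM t ht))
    _ = exp (K * t) * M := by ring
    _ ≤ exp (K * T) * M := by gcongr; exact ht.2

theorem iSup_norm_sub_le_exp_mul_iSup (hPW : ‖P.comp W‖ ≤ K)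
    (hu : ∀ t ∈ Icc (0 : ℝ) T, HasDerivAt u (-(u t) + W (u t) + g t) t)
    (hun : ∀ t ∈ Icc (0 : ℝ) T, HasDerivAt un (P (-(un t) + W (un t) + g t)) t)
    (h0 : un 0 = P (u 0)) (hPun : ∀ t ∈ Icc (0 : ℝ) T, P (un t) = un t) :
    ⨆ t : Icc (0 : ℝ) T, ‖u t - un t‖ ≤ exp (K * T) * ⨆ t : Icc (0 : ℝ) T, ‖u t - P (u t)‖ := by
  have hcont : ContinuousOn u (Icc 0 T) := fun t ht => (hu t ht).continuousAt.continuousWithinAt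
  have hM : ∀ t ∈ Icc (0 : ℝ) T, ‖u t - P (u t)‖ ≤ ⨆ s : Icc (0 : ℝ) T, ‖u s - P (u s)‖ :=
    fun t => le_iSup_Icc_of_continuousOn (hcont.sub (P.continuous.comp_continuousOn hcont)).norm
  exact Real.iSup_le (fun t => norm_sub_le_exp_mul hPW hu hun h0 hPun hM t.2)
    (mul_nonneg (exp_pos _).le (Real.iSup_nonneg fun _ => norm_nonneg _))

end ProjectedEquation

theorem total_error_spatial_part_general
    {X : Type*} [NormedAddCommGroup X] [NormedSpace ℝ X]
    {m : ℕ} (Γ : Set (Fin m → ℝ))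
    (ρ : Measure Γ)
    (T : ℝ) (Kbar : ℝ)
    (P : X →L[ℝ] X) (W : Γ → X →L[ℝ] X)
    (g : ℝ → Γ → X) (v : Γ → X) (u un : ℝ → Γ → X)
    (hW : ∀ y : Γ, ‖P.comp (W y)‖ ≤ Kbar)
    (hu : ∀ y : Γ, ∀ t ∈ Icc (0 : ℝ) T,
      HasDerivAt (fun t => u t y) (-(u t y) + W y (u t y) + g t y) t)
    (hu0 : ∀ y : Γ, u 0 y = v y)
    (hun : ∀ y : Γ, ∀ t ∈ Icc (0 : ℝ) T,
      HasDerivAt (fun t => un t y) (P (-(un t y) + W y (un t y) + g t y)) t)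
    (hun0 : ∀ y : Γ, un 0 y = P (v y))
    (hPun : ∀ y : Γ, ∀ t ∈ Icc (0 : ℝ) T, P (un t y) = un t y)
    (hmeas2 : MemLp (fun y : Γ => ⨆ t : Icc (0 : ℝ) T, ‖u t y - P (u t y)‖) 2 ρ) :
    Real.sqrt (∫ y, (⨆ t : Icc (0 : ℝ) T, ‖u t y - un t y‖) ^ 2 ∂ρ) ≤
      Real.exp (Kbar * T) *
        Real.sqrt (∫ y, (⨆ t : Icc (0 : ℝ) T, ‖u t y - P (u t y)‖) ^ 2 ∂ρ) :=
  sqrt_integral_sq_le_mul_sqrt_integral_sq (exp_pos _).le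
    (fun y => Real.iSup_nonneg fun _ => norm_nonneg _)
    (fun y => iSup_norm_sub_le_exp_mul_iSup (hW y) (hu y) (hun y)
      (by rw [hun0, hu0]) (hPun y))
    hmeas2.integrable_sq

/-- Spatial-projection part of the total error bound, in the `L²_ρ(Γ) ⊗ C⁰(J,X)` norm:
if for each random parameter `y ∈ Γ ⊆ ℝ^m`, `u(·,y)` solves the linear neural field
equation and `uₙ(·,y)` solves the projected equation with projector `P`, and
`‖P ∘ W(y)‖ ≤ K̄`, then
`(∫_Γ sup_t ‖u − uₙ‖² dρ)^{1/2} ≤ e^{K̄T} (∫_Γ sup_t ‖u − Pu‖² dρ)^{1/2}`. -/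
theorem total_error_spatial_part
    {X : Type*} [NormedAddCommGroup X] [NormedSpace ℝ X]
    {m : ℕ} (Γ : Set (Fin m → ℝ))
    (ρ : Measure Γ) [IsProbabilityMeasure ρ]
    (T : ℝ) (hT : 0 < T) (Kbar : ℝ) (hK : 0 < Kbar)
    (P : X →L[ℝ] X) (W : Γ → X →L[ℝ] X)
    (g : ℝ → Γ → X) (v : Γ → X) (u un : ℝ → Γ → X)
    (hW : ∀ y : Γ, ‖P.comp (W y)‖ ≤ Kbar)
    (hg : ∀ y : Γ, ContinuousOn (fun t => g t y) (Icc 0 T))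
    (hu : ∀ y : Γ, ∀ t ∈ Icc (0 : ℝ) T,
      HasDerivAt (fun t => u t y) (-(u t y) + W y (u t y) + g t y) t)
    (hu0 : ∀ y : Γ, u 0 y = v y)
    (hun : ∀ y : Γ, ∀ t ∈ Icc (0 : ℝ) T,
      HasDerivAt (fun t => un t y) (P (-(un t y) + W y (un t y) + g t y)) t)
    (hun0 : ∀ y : Γ, un 0 y = P (v y))
    (hPun : ∀ y : Γ, ∀ t ∈ Icc (0 : ℝ) T, P (un t y) = un t y)
    (hmeas1 : MemLp (fun y : Γ => ⨆ t : Icc (0 : ℝ) T, ‖u t y - un t y‖) 2 ρ)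
    (hmeas2 : MemLp (fun y : Γ => ⨆ t : Icc (0 : ℝ) T, ‖u t y - P (u t y)‖) 2 ρ) :
    Real.sqrt (∫ y, (⨆ t : Icc (0 : ℝ) T, ‖u t y - un t y‖) ^ 2 ∂ρ) ≤
      Real.exp (Kbar * T) *
        Real.sqrt (∫ y, (⨆ t : Icc (0 : ℝ) T, ‖u t y - P (u t y)‖) ^ 2 ∂ρ) :=
  total_error_spatial_part_general Γ ρ T Kbar P W g v u un hW hu hu0 hun hun0 hPun hmeas2
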